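/- arXiv:2401.03119 — 2 statements merged into one kernel-verified Lean document; each statement's English description precedes it below -/
import Mathlib

section
/- The coefficient of x^{4k} y^{4k} in f_3(x,y) = (x-y-γ_0) ∏_{j=1}^{2k} (x-α_j)(y-β_j)(x-y-γ_j)(x+y-δ_j) equals (-1)^k binomial(2k,k) [ Σ_{j=1}^{2k} (-α_j) - Σ_{j=1}^{2k} (-β_j) + Σ_{j=0}^{2k} (-γ_j) ]. -/
/-!
`f₃` is a product of `8k + 1` factors `ℓ + c`, with `ℓ` one of the linear forms `x, y, x - y,
x + y`, and `x^{4k} y^{4k}` has degree one less than the number of factors. Hence its coefficient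
is `∑ᵢ cᵢ · [x^{4k} y^{4k}] ∏_{j ≠ i} ℓⱼ`, and each cofactor is the leading form
`(x - y) (x y (x² - y²))^{2k}` divided by `ℓᵢ`. Expanding `(x² - y²)^n` binomially, a comparison
of parities leaves a single term `±(-1)^k C(2k, k)` when `ℓᵢ` is `x`, `y` or `x - y`, and two
terms cancelling by `C(2k-1, k-1) = C(2k-1, k)` when `ℓᵢ = x + y`.
-/

open MvPolynomial Finset

theorem MvPolynomial.coeff_prod_add_C_of_degree_add_one {R σ ι : Type*} [CommSemiring R]
    [DecidableEq ι] {s : Finset ι} {L : ι → MvPolynomial σ R} (c : ι → R)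
    (hL : ∀ i ∈ s, (L i).IsHomogeneous 1) {m : σ →₀ ℕ} (hm : m.degree + 1 = #s) :
    coeff m (∏ i ∈ s, (L i + C (c i))) =
      ∑ i ∈ s, c i * coeff m (∏ j ∈ s.erase i, L j) := by
  -- in the expansion over the sets `t` of factors contributing their constant term,
  -- homogeneity kills every `t` that is not a singleton
  have hvanish : ∀ t ∈ s.powerset, t ∉ s.powersetCard 1 →
      coeff m ((∏ i ∈ t, C (c i)) * ∏ i ∈ s \ t, L i) = 0 := by
    intro t hts ht
    rw [mem_powerset] at hts
    have hcard : #t ≠ 1 := fun h => ht (mem_powersetCard.2 ⟨hts, h⟩)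
    have hhom : (∏ i ∈ s \ t, L i).IsHomogeneous #(s \ t) := by
      simpa using IsHomogeneous.prod _ _ _ fun i hi => hL i (mem_sdiff.1 hi).1
    have hdeg : m.degree ≠ #(s \ t) := by
      rw [card_sdiff_of_subset hts]
      have := card_le_card hts
      omega
    rw [← map_prod, coeff_C_mul, hhom.coeff_eq_zero hdeg, mul_zero]
  simp_rw [add_comm (L _), prod_add, coeff_sum]
  rw [← sum_subset (fun t ht => mem_powerset.2 (mem_powersetCard.1 ht).1) hvanish,
    powersetCard_one, sum_map]
  simp [← map_prod, coeff_C_mul, sdiff_singleton_eq_erase]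

variable {R : Type*} [CommRing R]

theorem single_zero_add_single_one_inj {a b a' b' : ℕ} :
    (Finsupp.single 0 a + Finsupp.single 1 b : Fin 2 →₀ ℕ) =
        Finsupp.single 0 a' + Finsupp.single 1 b' ↔ a = a' ∧ b = b' := by
  simp [Finsupp.ext_iff, Fin.forall_fin_two]

theorem X_pow_mul_X_pow_mul_sq_sub_sq_pow (p q n : ℕ) :
    (X 0 ^ p * X 1 ^ q * (X 0 ^ 2 - X 1 ^ 2) ^ n : MvPolynomial (Fin 2) R) =
      ∑ ij ∈ antidiagonal n,
        monomial (Finsupp.single 0 (p + 2 * ij.1) + Finsupp.single 1 (q + 2 * ij.2))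
          ((-1) ^ ij.2 * (n.choose ij.1 : R)) := by
  rw [sub_eq_add_neg, (Commute.all _ _).add_pow', mul_sum]
  refine sum_congr rfl fun ij _ => ?_
  rw [monomial_add_single, ← C_mul_X_pow_eq_monomial, nsmul_eq_mul, map_mul, map_pow, map_neg,
    map_one, map_natCast]
  ring

theorem coeff_X_pow_mul_X_pow_mul_sq_sub_sq_pow {p q n i j a b : ℕ} (hij : i + j = n)
    (ha : a = p + 2 * i) (hb : b = q + 2 * j) :
    coeff (Finsupp.single 0 a + Finsupp.single 1 b)
      (X 0 ^ p * X 1 ^ q * (X 0 ^ 2 - X 1 ^ 2) ^ n : MvPolynomial (Fin 2) R) =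
        (-1) ^ j * n.choose i := by
  rw [X_pow_mul_X_pow_mul_sq_sub_sq_pow, coeff_sum, sum_eq_single (i, j)]
  · simp [ha, hb]
  · rintro ⟨i', j'⟩ hij' hne
    rw [HasAntidiagonal.mem_antidiagonal] at hij'
    simp only [ne_eq, Prod.ext_iff] at hne
    rw [coeff_monomial, if_neg (by rw [single_zero_add_single_one_inj]; omega)]
  · simp [hij]

theorem coeff_X_pow_mul_X_pow_mul_sq_sub_sq_pow_of_mod_two_ne {p q n a b : ℕ}
    (h : a % 2 ≠ p % 2) :
    coeff (Finsupp.single 0 a + Finsupp.single 1 b)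
      (X 0 ^ p * X 1 ^ q * (X 0 ^ 2 - X 1 ^ 2) ^ n : MvPolynomial (Fin 2) R) = 0 := by
  rw [X_pow_mul_X_pow_mul_sq_sub_sq_pow, coeff_sum]
  exact sum_eq_zero fun ij _ =>
    by rw [coeff_monomial, if_neg (by rw [single_zero_add_single_one_inj]; omega)]

local notation "lead" n => (X 0 - X 1) * (X 0 * X 1 * (X 0 ^ 2 - X 1 ^ 2)) ^ n
local notation "mono" k => (Finsupp.single 0 (4 * k) + Finsupp.single 1 (4 * k) : Fin 2 →₀ ℕ)

noncomputable def factorForm : Fin 4 → MvPolynomial (Fin 2) R :=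
  ![X 0, X 1, X 0 - X 1, X 0 + X 1]

theorem isHomogeneous_factorForm (t : Fin 4) :
    (factorForm t : MvPolynomial (Fin 2) R).IsHomogeneous 1 := by
  fin_cases t
  · exact isHomogeneous_X _ _
  · exact isHomogeneous_X _ _
  · exact (isHomogeneous_X _ _).sub (isHomogeneous_X _ _)
  · exact (isHomogeneous_X _ _).add (isHomogeneous_X _ _)

theorem prod_factorForm (n : ℕ) :
    ∏ p ∈ insert ((0 : ℕ), (2 : Fin 4)) (Icc 1 n ×ˢ univ),
      (factorForm p.2 : MvPolynomial (Fin 2) R) = lead n := by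
  rw [prod_insert (by simp), prod_product]
  simp only [Fin.prod_univ_four, factorForm, Matrix.cons_val]
  rw [prod_const, Nat.card_Icc, Nat.add_sub_cancel]
  ring

section Cofactors

variable [IsDomain R] {k : ℕ} {P : MvPolynomial (Fin 2) R}

theorem coeff_of_X_sub_X_mul_eq (hP : (X 0 - X 1) * P = lead (2 * k)) :
    coeff (mono k) P = (-1) ^ k * (2 * k).choose k := by
  have hne : (X 0 - X 1 : MvPolynomial (Fin 2) R) ≠ 0 := fun h => by
    simpa using congrArg (coeff (Finsupp.single 0 1)) h
  rw [mul_pow, mul_pow] at hP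
  obtain rfl : P = X 0 ^ (2 * k) * X 1 ^ (2 * k) * (X 0 ^ 2 - X 1 ^ 2) ^ (2 * k) :=
    mul_left_cancel₀ hne (hP.trans (by ring))
  exact coeff_X_pow_mul_X_pow_mul_sq_sub_sq_pow (by omega) (by omega) (by omega)

theorem coeff_of_X_zero_mul_eq (hk : 1 ≤ k) (hP : X 0 * P = lead (2 * k)) :
    coeff (mono k) P = (-1) ^ k * (2 * k).choose k := by
  obtain ⟨u, rfl⟩ := Nat.exists_eq_add_of_le' hk
  rw [mul_pow, mul_pow] at hP
  obtain rfl : P = X 0 ^ (2 * u + 2) * X 1 ^ (2 * u + 2) * (X 0 ^ 2 - X 1 ^ 2) ^ (2 * u + 2) -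
      X 0 ^ (2 * u + 1) * X 1 ^ (2 * u + 3) * (X 0 ^ 2 - X 1 ^ 2) ^ (2 * u + 2) :=
    mul_left_cancel₀ (X_ne_zero 0) (hP.trans (by ring))
  rw [coeff_sub, coeff_X_pow_mul_X_pow_mul_sq_sub_sq_pow (i := u + 1) (j := u + 1)
    (by omega) (by omega) (by omega),
    coeff_X_pow_mul_X_pow_mul_sq_sub_sq_pow_of_mod_two_ne (by omega), sub_zero]
  ring_nf

theorem coeff_of_X_one_mul_eq (hk : 1 ≤ k) (hP : X 1 * P = lead (2 * k)) :
    coeff (mono k) P = -((-1) ^ k * (2 * k).choose k) := by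
  obtain ⟨u, rfl⟩ := Nat.exists_eq_add_of_le' hk
  rw [mul_pow, mul_pow] at hP
  obtain rfl : P = X 0 ^ (2 * u + 3) * X 1 ^ (2 * u + 1) * (X 0 ^ 2 - X 1 ^ 2) ^ (2 * u + 2) -
      X 0 ^ (2 * u + 2) * X 1 ^ (2 * u + 2) * (X 0 ^ 2 - X 1 ^ 2) ^ (2 * u + 2) :=
    mul_left_cancel₀ (X_ne_zero 1) (hP.trans (by ring))
  rw [coeff_sub, coeff_X_pow_mul_X_pow_mul_sq_sub_sq_pow_of_mod_two_ne (by omega),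
    coeff_X_pow_mul_X_pow_mul_sq_sub_sq_pow (i := u + 1) (j := u + 1) (by omega) (by omega)
    (by omega), zero_sub]
  ring_nf

theorem coeff_of_X_add_X_mul_eq (hk : 1 ≤ k) (hP : (X 0 + X 1) * P = lead (2 * k)) :
    coeff (mono k) P = 0 := by
  have hne : (X 0 + X 1 : MvPolynomial (Fin 2) R) ≠ 0 := fun h => by
    simpa using congrArg (coeff (Finsupp.single 0 1)) h
  obtain ⟨u, rfl⟩ := Nat.exists_eq_add_of_le' hk
  rw [mul_pow, mul_pow] at hP
  obtain rfl : P = X 0 ^ (2 * u + 4) * X 1 ^ (2 * u + 2) * (X 0 ^ 2 - X 1 ^ 2) ^ (2 * u + 1) -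
      (X 0 ^ (2 * u + 3) * X 1 ^ (2 * u + 3) * (X 0 ^ 2 - X 1 ^ 2) ^ (2 * u + 1) +
        X 0 ^ (2 * u + 3) * X 1 ^ (2 * u + 3) * (X 0 ^ 2 - X 1 ^ 2) ^ (2 * u + 1)) +
      X 0 ^ (2 * u + 2) * X 1 ^ (2 * u + 4) * (X 0 ^ 2 - X 1 ^ 2) ^ (2 * u + 1) :=
    mul_left_cancel₀ hne (hP.trans (by ring))
  rw [coeff_add, coeff_sub, coeff_add,
    coeff_X_pow_mul_X_pow_mul_sq_sub_sq_pow (i := u) (j := u + 1) (by omega) (by omega) (by omega),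
    coeff_X_pow_mul_X_pow_mul_sq_sub_sq_pow_of_mod_two_ne (by omega),
    coeff_X_pow_mul_X_pow_mul_sq_sub_sq_pow (i := u + 1) (j := u) (by omega) (by omega) (by omega),
    Nat.choose_symm_half]
  ring

theorem coeff_cofactor (hk : 1 ≤ k) (t : Fin 4) (hP : factorForm t * P = lead (2 * k)) :
    coeff (mono k) P =
      ![(-1 : R) ^ k * (2 * k).choose k, -((-1) ^ k * (2 * k).choose k),
        (-1) ^ k * (2 * k).choose k, 0] t := by
  fin_cases t
  exacts [coeff_of_X_zero_mul_eq hk hP, coeff_of_X_one_mul_eq hk hP, coeff_of_X_sub_X_mul_eq hP,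
    coeff_of_X_add_X_mul_eq hk hP]

end Cofactors

theorem stmt_5 (k : ℕ) (hk : 1 ≤ k) (α β γ δ : ℕ → ℝ) :
    MvPolynomial.coeff (Finsupp.single 0 (4 * k) + Finsupp.single 1 (4 * k))
      ((X 0 - X 1 - C (γ 0)) *
       ∏ j ∈ Finset.Icc 1 (2 * k),
         (X 0 - C (α j)) * (X 1 - C (β j)) * (X 0 - X 1 - C (γ j)) * (X 0 + X 1 - C (δ j)) :
        MvPolynomial (Fin 2) ℝ)
      = (-1 : ℝ) ^ k * (Nat.choose (2 * k) k : ℝ) *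
        (∑ j ∈ Finset.Icc 1 (2 * k), (-(α j)) - ∑ j ∈ Finset.Icc 1 (2 * k), (-(β j)) +
         ∑ j ∈ Finset.Icc 0 (2 * k), (-(γ j))) := by
  -- the factor `x - y - γ₀` gets the index `(0, 2)`, the four factors of block `j` the `(j, t)`
  set S := insert ((0 : ℕ), (2 : Fin 4)) (Icc 1 (2 * k) ×ˢ (univ : Finset (Fin 4)))
  have h02 : ((0 : ℕ), (2 : Fin 4)) ∉ Icc 1 (2 * k) ×ˢ (univ : Finset (Fin 4)) := by simp
  have hf : ((X 0 - X 1 - C (γ 0)) *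
      ∏ j ∈ Icc 1 (2 * k),
        (X 0 - C (α j)) * (X 1 - C (β j)) * (X 0 - X 1 - C (γ j)) * (X 0 + X 1 - C (δ j)) :
        MvPolynomial (Fin 2) ℝ) = ∏ p ∈ S, (factorForm p.2 + C (-![α, β, γ, δ] p.2 p.1)) := by
    simp [S, prod_insert h02, prod_product, Fin.prod_univ_four, factorForm, sub_eq_add_neg,
      mul_assoc]
  have hdeg :
      (Finsupp.single (0 : Fin 2) (4 * k) + Finsupp.single 1 (4 * k)).degree + 1 = #S := by
    rw [map_add, Finsupp.degree_single, Finsupp.degree_single, card_insert_of_notMem h02,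
      card_product, Nat.card_Icc, card_univ, Fintype.card_fin]
    omega
  rw [hf, coeff_prod_add_C_of_degree_add_one _ (fun p _ => isHomogeneous_factorForm p.2) hdeg,
    sum_congr rfl fun p hp => by
      rw [coeff_cofactor hk p.2 (by rw [mul_prod_erase S (fun p => factorForm p.2) hp,
        prod_factorForm])],
    sum_insert h02, sum_product, ← insert_Icc_add_one_left_eq_Icc (Nat.zero_le _),
    sum_insert (by simp)]
  simp only [Fin.sum_univ_four, Matrix.cons_val, mul_zero, add_zero, zero_add, sum_add_distrib,
    ← sum_mul]
  ring
end

section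
/- If a polynomial f(x,y) = ∏_{j=1}^{2k} (x-α_j)(y-β_j)(x-y-γ_j)(x+y-δ_j) over ℝ vanishes at every point of the grid S × S where S = {-2k,…,2k}, a contradiction arises; equivalently, no such product of 8k real lines (2k of each of the four slopes 0, ∞, +1, -1) can cover all (4k+1)² points of the grid S × S. -/
/-!
Every factor of `f` is an affine function, so `f` has total degree at most `8k` and its
homogeneous component of degree `8k` is the product of the linear parts,
`(x y (x² - y²))^(2k)`. The coefficient of `x^(4k) y^(4k)` in it comes from the middle term of
the binomial expansion of `(x² - y²)^(2k)` and equals `(-1)^k (2k choose k) ≠ 0`. Since both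
exponents are smaller than `#S = 4k + 1`, Alon's Combinatorial Nullstellensatz yields a point of
`S × S` where `f` does not vanish.
-/

open Finset

namespace MvPolynomial

section CommSemiring

variable {σ R : Type*} [CommSemiring R]

theorem homogeneousComponent_mul_of_totalDegree_le {p q : MvPolynomial σ R} {m n : ℕ}
    (hp : p.totalDegree ≤ m) (hq : q.totalDegree ≤ n) :
    homogeneousComponent (m + n) (p * q) =
      homogeneousComponent m p * homogeneousComponent n q := by
  classical
  ext d
  rw [coeff_homogeneousComponent]
  split_ifs with hd
  · rw [coeff_mul, coeff_mul]
    refine sum_congr rfl fun ab hab => ?_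
    have hdeg : ab.1.degree + ab.2.degree = m + n := by
      rw [← hd, ← mem_antidiagonal.mp hab, map_add]
    rw [coeff_homogeneousComponent, coeff_homogeneousComponent]
    rcases lt_trichotomy ab.1.degree m with h | h | h
    · rw [coeff_eq_zero_of_totalDegree_lt (hq.trans_lt (show n < ab.2.degree by omega))]
      simp
    · simp [h, show ab.2.degree = n by omega]
    · rw [coeff_eq_zero_of_totalDegree_lt (hp.trans_lt h)]
      simp
  · exact (((homogeneousComponent_isHomogeneous m p).mul
      (homogeneousComponent_isHomogeneous n q)).coeff_eq_zero hd).symm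

theorem homogeneousComponent_prod_of_totalDegree_le {ι : Type*} (s : Finset ι)
    (f : ι → MvPolynomial σ R) (n : ι → ℕ) (h : ∀ i ∈ s, (f i).totalDegree ≤ n i) :
    homogeneousComponent (∑ i ∈ s, n i) (∏ i ∈ s, f i) =
      ∏ i ∈ s, homogeneousComponent (n i) (f i) := by
  induction s using Finset.cons_induction with
  | empty => simp
  | cons a s _ ih =>
    rw [prod_cons, sum_cons, prod_cons, ← ih fun i hi => h i (mem_cons_of_mem hi)]
    refine homogeneousComponent_mul_of_totalDegree_le (h a (mem_cons_self a s)) ?_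
    exact (totalDegree_finsetProd _ _).trans (sum_le_sum fun i hi => h i (mem_cons_of_mem hi))

end CommSemiring

section CommRing

variable {σ R : Type*} [CommRing R]

theorem totalDegree_sub_C_le_one {ℓ : MvPolynomial σ R} (hℓ : ℓ.IsHomogeneous 1) (c : R) :
    (ℓ - C c).totalDegree ≤ 1 :=
  (totalDegree_sub_C_le ℓ c).trans hℓ.totalDegree_le

theorem homogeneousComponent_one_sub_C {ℓ : MvPolynomial σ R} (hℓ : ℓ.IsHomogeneous 1)
    (c : R) : homogeneousComponent 1 (ℓ - C c) = ℓ := by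
  rw [map_sub, homogeneousComponent_eq_self hℓ,
    homogeneousComponent_of_mem (isHomogeneous_C σ c), if_neg one_ne_zero, sub_zero]

variable {ι : Type*} (s : Finset ι) {ℓ : ι → MvPolynomial σ R} (c : ι → R)

theorem totalDegree_prod_sub_C_le (hℓ : ∀ i ∈ s, (ℓ i).IsHomogeneous 1) :
    (∏ i ∈ s, (ℓ i - C (c i))).totalDegree ≤ #s :=
  (totalDegree_finsetProd _ _).trans <| by
    simpa using sum_le_sum fun i hi => totalDegree_sub_C_le_one (hℓ i hi) (c i)

theorem homogeneousComponent_prod_sub_C (hℓ : ∀ i ∈ s, (ℓ i).IsHomogeneous 1) :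
    homogeneousComponent #s (∏ i ∈ s, (ℓ i - C (c i))) = ∏ i ∈ s, ℓ i := by
  have h := homogeneousComponent_prod_of_totalDegree_le s _ (fun _ => 1)
    fun i hi => totalDegree_sub_C_le_one (hℓ i hi) (c i)
  rw [sum_const, smul_eq_mul, mul_one] at h
  rw [h]
  exact prod_congr rfl fun i hi => homogeneousComponent_one_sub_C (hℓ i hi) (c i)

theorem X_mul_X_mul_sq_sub_sq_pow (i j : σ) (n : ℕ) :
    (X i * X j * (X i ^ 2 - X j ^ 2) : MvPolynomial σ R) ^ n =
      ∑ m ∈ range (n + 1),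
        monomial (Finsupp.single i (n + 2 * m) + Finsupp.single j (n + 2 * (n - m)))
          ((-1) ^ (n - m) * (n.choose m : R)) := by
  rw [mul_pow, sub_eq_add_neg, add_pow, mul_sum]
  refine sum_congr rfl fun m _ => ?_
  rw [monomial_add_single, ← C_mul_X_pow_eq_monomial, map_mul, map_pow, map_neg, map_one,
    map_natCast]
  ring

theorem coeff_X_mul_X_mul_sq_sub_sq_pow {i j : σ} (hij : i ≠ j) (k : ℕ) :
    coeff (Finsupp.single i (4 * k) + Finsupp.single j (4 * k))
        ((X i * X j * (X i ^ 2 - X j ^ 2) : MvPolynomial σ R) ^ (2 * k)) =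
      (-1) ^ k * ((2 * k).choose k : R) := by
  classical
  rw [X_mul_X_mul_sq_sub_sq_pow, coeff_sum, sum_eq_single k]
  · rw [coeff_monomial, if_pos (by congr 2 <;> omega), show 2 * k - k = k by omega]
  · intro m _ hmk
    rw [coeff_monomial, if_neg]
    intro h
    have := DFunLike.congr_fun h i
    simp only [Finsupp.add_apply, Finsupp.single_eq_same, Finsupp.single_apply, if_neg hij.symm]
      at this
    omega
  · intro hk
    exact absurd (mem_range.mpr (by omega)) hk

end CommRing

theorem exists_eval_ne_zero_of_coeff_ne_zero_of_totalDegree_le {σ R : Type*} [Finite σ]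
    [CommRing R] [IsDomain R] (f : MvPolynomial σ R) (t : σ →₀ ℕ) (ht : f.coeff t ≠ 0)
    (hdeg : f.totalDegree ≤ t.degree) (S : σ → Finset R) (htS : ∀ i, t i < #(S i)) :
    ∃ s : σ → R, (∀ i, s i ∈ S i) ∧ eval s f ≠ 0 :=
  combinatorial_nullstellensatz_exists_eval_nonzero f t ht
    (le_antisymm hdeg (le_totalDegree (mem_support_iff.mpr ht))) S htS

end MvPolynomial

open MvPolynomial

noncomputable def lineForm : Fin 4 → MvPolynomial (Fin 2) ℝ :=
  ![X 0, X 1, X 0 - X 1, X 0 + X 1]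

theorem isHomogeneous_lineForm (i : Fin 4) : (lineForm i).IsHomogeneous 1 := by
  fin_cases i
  · exact isHomogeneous_X ℝ 0
  · exact isHomogeneous_X ℝ 1
  · exact (isHomogeneous_X ℝ 0).sub (isHomogeneous_X ℝ 1)
  · exact (isHomogeneous_X ℝ 0).add (isHomogeneous_X ℝ 1)

theorem prod_lineForm : ∏ i, lineForm i = X 0 * X 1 * (X 0 ^ 2 - X 1 ^ 2) := by
  simp only [Fin.prod_univ_four, lineForm, Matrix.cons_val]
  ring

noncomputable def linesProduct (s : Finset ℕ) (c : Fin 4 → ℕ → ℝ) : MvPolynomial (Fin 2) ℝ :=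
  ∏ p ∈ s ×ˢ univ, (lineForm p.2 - C (c p.2 p.1))

variable (s : Finset ℕ) (c : Fin 4 → ℕ → ℝ)

theorem eval_linesProduct (x y : ℝ) :
    eval ![x, y] (linesProduct s c) =
      ∏ j ∈ s, (x - c 0 j) * (y - c 1 j) * (x - y - c 2 j) * (x + y - c 3 j) := by
  simp [linesProduct, prod_product, Fin.prod_univ_four, lineForm, mul_assoc]

theorem totalDegree_linesProduct_le : (linesProduct s c).totalDegree ≤ 4 * #s := by
  rw [linesProduct]
  simpa [mul_comm] using
    totalDegree_prod_sub_C_le (s ×ˢ univ) _ fun p _ => isHomogeneous_lineForm p.2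

theorem homogeneousComponent_linesProduct :
    homogeneousComponent (4 * #s) (linesProduct s c) =
      (X 0 * X 1 * (X 0 ^ 2 - X 1 ^ 2)) ^ #s := by
  have h := homogeneousComponent_prod_sub_C (s ×ˢ univ) (fun p => c p.2 p.1)
    fun p _ => isHomogeneous_lineForm p.2
  rw [card_product, card_univ, Fintype.card_fin, mul_comm] at h
  rw [linesProduct, h, prod_product]
  simp only [prod_const, prod_lineForm]

theorem coeff_linesProduct {k : ℕ} (hs : #s = 2 * k) :
    coeff (Finsupp.single 0 (4 * k) + Finsupp.single 1 (4 * k)) (linesProduct s c) =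
      (-1) ^ k * ((2 * k).choose k : ℝ) := by
  have h := coeff_homogeneousComponent (4 * #s) (linesProduct s c)
    (Finsupp.single 0 (4 * k) + Finsupp.single 1 (4 * k))
  rw [if_pos (by rw [map_add, Finsupp.degree_single, Finsupp.degree_single, hs]; ring),
    homogeneousComponent_linesProduct, hs] at h
  rw [← h, coeff_X_mul_X_mul_sq_sub_sq_pow (by decide)]

theorem exists_eval_linesProduct_ne_zero {k : ℕ} (hs : #s = 2 * k) (S : Fin 2 → Finset ℝ)
    (hS : ∀ i, 4 * k < #(S i)) :
    ∃ p : Fin 2 → ℝ, (∀ i, p i ∈ S i) ∧ eval p (linesProduct s c) ≠ 0 := by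
  refine exists_eval_ne_zero_of_coeff_ne_zero_of_totalDegree_le _
    (Finsupp.single 0 (4 * k) + Finsupp.single 1 (4 * k)) ?_ ?_ S ?_
  · rw [coeff_linesProduct s c hs]
    exact mul_ne_zero (pow_ne_zero _ (by norm_num))
      (Nat.cast_ne_zero.mpr (Nat.choose_ne_zero (by omega)))
  · rw [map_add, Finsupp.degree_single, Finsupp.degree_single]
    have := totalDegree_linesProduct_le s c
    omega
  · intro i
    fin_cases i <;> simpa using hS _

theorem stmt_13_general (k : ℕ) (α β γ δ : ℕ → ℝ) :
    ¬ (∀ x y : ℤ, x ∈ Finset.Icc (-(2 * k : ℤ)) (2 * k) →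
        y ∈ Finset.Icc (-(2 * k : ℤ)) (2 * k) →
        (∏ j ∈ Finset.Icc 1 (2 * k),
          ((x : ℝ) - α j) * ((y : ℝ) - β j) *
          ((x : ℝ) - (y : ℝ) - γ j) * ((x : ℝ) + (y : ℝ) - δ j)) = 0) := by
  intro H
  set grid : Finset ℝ := (Icc (-(2 * k : ℤ)) (2 * k)).image (↑)
  have hgrid : #grid = 4 * k + 1 := by
    rw [card_image_of_injective _ Int.cast_injective, Int.card_Icc]
    omega
  obtain ⟨p, hp, hne⟩ := exists_eval_linesProduct_ne_zero (Icc 1 (2 * k)) ![α, β, γ, δ]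
    (k := k) (by simp) (fun _ => grid) (by simp [hgrid])
  obtain ⟨x, hx, hpx⟩ := mem_image.mp (hp 0)
  obtain ⟨y, hy, hpy⟩ := mem_image.mp (hp 1)
  refine hne ?_
  rw [show p = ![(x : ℝ), (y : ℝ)] by ext i; fin_cases i <;> simp [hpx, hpy], eval_linesProduct]
  exact H x y hx hy

theorem stmt_13 (k : ℕ) (hk : 1 ≤ k) (α β γ δ : ℕ → ℝ) :
    ¬ (∀ x y : ℤ, x ∈ Finset.Icc (-(2 * k : ℤ)) (2 * k) →
        y ∈ Finset.Icc (-(2 * k : ℤ)) (2 * k) →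
        (∏ j ∈ Finset.Icc 1 (2 * k),
          ((x : ℝ) - α j) * ((y : ℝ) - β j) *
          ((x : ℝ) - (y : ℝ) - γ j) * ((x : ℝ) + (y : ℝ) - δ j)) = 0) :=
  stmt_13_general k α β γ δ
end
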